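/- Let f_+, f_-, a_+, a_- : ℝ → ℝ be continuous with f_± bounded and integrable and a_± bounded, nonnegative, compactly supported. Define Da_±(t,∞) = ∫_t^∞ a_±(r) dr and Da_∓(t,l) = ∫_t^l a_∓(r) dr, and set G_±(l) = ∫_{-∞}^l f_∓(t) exp(−Da_∓(t,l) − Da_±(l,∞)) dt + ∫_l^∞ f_±(t) exp(−Da_±(t,∞)) dt. Then G_± is differentiable and G_±'(l) = ∓(a_-(l) − a_+(l)) ∫_{-∞}^l f_∓(t) exp(−Da_∓(t,l) − Da_±(l,∞)) dt ± (f_-(l) − f_+(l)) exp(−Da_±(l,∞)). -/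

import Mathlib

/-!
With `D a x = ∫ r in Ioi x, a r`, the attenuation over `[t, l]` splits as
`exp (-∫ r in t..l, b r) = exp (D b l) * exp (-D b t)`. Hence the first term of `G` is
`exp (D b l - D a l)` times the primitive `∫ t in Iio l, g t * exp (-D b t)` of an integrable
function, and the second term is a tail integral `∫ t in Ioi l, f t * exp (-D a t)`. Since
`D a` has derivative `-a`, the fundamental theorem of calculus and the product rule give
the formula.
-/

open MeasureTheory Set

section Primitives

variable {h : ℝ → ℝ}

lemma integral_Ioi_eq_sub_intervalIntegral (hi : Integrable h) (c x : ℝ) :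
    ∫ t in Ioi x, h t = (∫ t in Ioi c, h t) - ∫ t in c..x, h t := by
  rw [← intervalIntegral.integral_Ioi_sub_Ioi' hi.integrableOn hi.integrableOn]
  ring

lemma integral_Iio_eq_add_intervalIntegral (hi : Integrable h) (c x : ℝ) :
    ∫ t in Iio x, h t = (∫ t in Iio c, h t) + ∫ t in c..x, h t := by
  rw [← intervalIntegral.integral_Iio_sub_Iio' hi.integrableOn hi.integrableOn]
  ring

lemma continuous_integral_Ioi (hi : Integrable h) : Continuous fun x => ∫ t in Ioi x, h t := by
  rw [funext (integral_Ioi_eq_sub_intervalIntegral hi 0)]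
  exact continuous_const.sub
    (intervalIntegral.continuous_primitive (fun _ _ => hi.intervalIntegrable) 0)

lemma hasDerivAt_integral_Ioi (hi : Integrable h) {x : ℝ} (hx : ContinuousAt h x) :
    HasDerivAt (fun y => ∫ t in Ioi y, h t) (-h x) x := by
  rw [funext (integral_Ioi_eq_sub_intervalIntegral hi 0)]
  exact (intervalIntegral.integral_hasDerivAt_right hi.intervalIntegrable
    hi.aestronglyMeasurable.stronglyMeasurableAtFilter hx).const_sub _

lemma hasDerivAt_integral_Iio (hi : Integrable h) {x : ℝ} (hx : ContinuousAt h x) :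
    HasDerivAt (fun y => ∫ t in Iio y, h t) (h x) x := by
  rw [funext (integral_Iio_eq_add_intervalIntegral hi 0)]
  exact (intervalIntegral.integral_hasDerivAt_right hi.intervalIntegrable
    hi.aestronglyMeasurable.stronglyMeasurableAtFilter hx).const_add _

end Primitives

section Attenuation

variable {f g a b : ℝ → ℝ}

lemma neg_integral_Ioi_le (ha : Integrable a) (x : ℝ) :
    -∫ r in Ioi x, a r ≤ ∫ r, ‖a r‖ :=
  calc -∫ r in Ioi x, a r ≤ ‖∫ r in Ioi x, a r‖ := neg_le_abs _
    _ ≤ ∫ r in Ioi x, ‖a r‖ := norm_integral_le_integral_norm _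
    _ ≤ ∫ r, ‖a r‖ := setIntegral_le_integral ha.norm (.of_forall fun _ => norm_nonneg _)

lemma MeasureTheory.Integrable.mul_exp_neg_integral_Ioi (hf : Integrable f) (ha : Integrable a) :
    Integrable fun t => f t * Real.exp (-∫ r in Ioi t, a r) :=
  hf.mul_bdd (continuous_integral_Ioi ha).neg.rexp.aestronglyMeasurable
    (.of_forall fun t => by
      rw [Real.norm_of_nonneg (Real.exp_pos _).le]
      exact Real.exp_le_exp.mpr (neg_integral_Ioi_le ha t))

lemma exp_neg_intervalIntegral (hb : Integrable b) (t x : ℝ) :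
    Real.exp (-∫ r in t..x, b r)
      = Real.exp (∫ r in Ioi x, b r) * Real.exp (-∫ r in Ioi t, b r) := by
  rw [← intervalIntegral.integral_Ioi_sub_Ioi' hb.integrableOn hb.integrableOn, ← Real.exp_add]
  ring_nf

lemma integral_Iio_mul_exp_neg_intervalIntegral (hb : Integrable b) (x c : ℝ) :
    ∫ t in Iio x, g t * Real.exp (-(∫ r in t..x, b r) - c)
      = Real.exp ((∫ r in Ioi x, b r) - c) * ∫ t in Iio x, g t * Real.exp (-∫ r in Ioi t, b r) := by
  rw [← integral_const_mul]
  refine setIntegral_congr_fun measurableSet_Iio fun t _ => ?_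
  rw [sub_eq_add_neg, Real.exp_add, exp_neg_intervalIntegral hb, sub_eq_add_neg, Real.exp_add]
  ring

theorem hasDerivAt_edge_limit (hf : Integrable f) (hg : Integrable g)
    (ha : Integrable a) (hb : Integrable b) {l : ℝ} (hfl : ContinuousAt f l)
    (hgl : ContinuousAt g l) (hal : ContinuousAt a l) (hbl : ContinuousAt b l) :
    HasDerivAt (fun x => (∫ t in Iio x, g t * Real.exp (-(∫ r in t..x, b r) - ∫ r in Ioi x, a r))
        + ∫ t in Ioi x, f t * Real.exp (-(∫ r in Ioi t, a r)))
      (-(b l - a l) * (∫ t in Iio l, g t * Real.exp (-(∫ r in t..l, b r) - ∫ r in Ioi l, a r))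
        + (g l - f l) * Real.exp (-(∫ r in Ioi l, a r))) l := by
  have hDa := hasDerivAt_integral_Ioi ha hal
  have hDb := hasDerivAt_integral_Ioi hb hbl
  have hgD : ContinuousAt (fun t => g t * Real.exp (-∫ r in Ioi t, b r)) l :=
    hgl.mul (continuous_integral_Ioi hb).neg.rexp.continuousAt
  have hfD : ContinuousAt (fun t => f t * Real.exp (-∫ r in Ioi t, a r)) l :=
    hfl.mul (continuous_integral_Ioi ha).neg.rexp.continuousAt
  have hfirst := (hDb.sub hDa).exp.mul
    (hasDerivAt_integral_Iio (hg.mul_exp_neg_integral_Ioi hb) hgD)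
  have hsecond := hasDerivAt_integral_Ioi (hf.mul_exp_neg_integral_Ioi ha) hfD
  simp_rw [integral_Iio_mul_exp_neg_intervalIntegral hb]
  refine (hfirst.add hsecond).congr_deriv ?_
  simp only [Pi.sub_apply]
  rw [mul_left_comm, ← Real.exp_add]
  ring_nf

end Attenuation

theorem stmt_1_general
    (fP fM aP aM : ℝ → ℝ)
    (hfPc : Continuous fP) (hfMc : Continuous fM)
    (hfPi : Integrable fP) (hfMi : Integrable fM)
    (haPc : Continuous aP) (haMc : Continuous aM)
    (haPs : HasCompactSupport aP) (haMs : HasCompactSupport aM)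
    (DaP DaM : ℝ → ℝ)
    (hDaP : DaP = fun t => ∫ r in Set.Ioi t, aP r)
    (hDaM : DaM = fun t => ∫ r in Set.Ioi t, aM r)
    (GP GM : ℝ → ℝ)
    (hGP : GP = fun l => (∫ t in Set.Iio l, fM t * Real.exp (-(∫ r in t..l, aM r) - DaP l))
        + ∫ t in Set.Ioi l, fP t * Real.exp (-(DaP t)))
    (hGM : GM = fun l => (∫ t in Set.Iio l, fP t * Real.exp (-(∫ r in t..l, aP r) - DaM l))
        + ∫ t in Set.Ioi l, fM t * Real.exp (-(DaM t)))
    (l : ℝ) :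
    HasDerivAt GP
      (-(aM l - aP l) * (∫ t in Set.Iio l, fM t * Real.exp (-(∫ r in t..l, aM r) - DaP l))
        + (fM l - fP l) * Real.exp (-(DaP l))) l
    ∧ HasDerivAt GM
      ((aM l - aP l) * (∫ t in Set.Iio l, fP t * Real.exp (-(∫ r in t..l, aP r) - DaM l))
        - (fM l - fP l) * Real.exp (-(DaM l))) l := by
  subst hDaP hDaM hGP hGM
  have haPi : Integrable aP := haPc.integrable_of_hasCompactSupport haPs
  have haMi : Integrable aM := haMc.integrable_of_hasCompactSupport haMs
  refine ⟨hasDerivAt_edge_limit hfPi hfMi haPi haMi hfPc.continuousAt hfMc.continuousAt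
    haPc.continuousAt haMc.continuousAt, ?_⟩
  convert hasDerivAt_edge_limit hfMi hfPi haMi haPi hfMc.continuousAt hfPc.continuousAt
    haMc.continuousAt haPc.continuousAt using 1
  ring

/-- Equation (eq,edged1): derivative in the translation parameter `l` of the one-sided
limits `G_±` of the attenuated Radon transform along a straight edge. -/
theorem stmt_1
    (fP fM aP aM : ℝ → ℝ)
    (hfPc : Continuous fP) (hfMc : Continuous fM)
    (hfPi : Integrable fP) (hfMi : Integrable fM)
    (hfPb : ∃ C, ∀ t, |fP t| ≤ C) (hfMb : ∃ C, ∀ t, |fM t| ≤ C)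
    (haPc : Continuous aP) (haMc : Continuous aM)
    (haPnn : ∀ t, 0 ≤ aP t) (haMnn : ∀ t, 0 ≤ aM t)
    (haPs : HasCompactSupport aP) (haMs : HasCompactSupport aM)
    (DaP DaM : ℝ → ℝ)
    (hDaP : DaP = fun t => ∫ r in Set.Ioi t, aP r)
    (hDaM : DaM = fun t => ∫ r in Set.Ioi t, aM r)
    (GP GM : ℝ → ℝ)
    (hGP : GP = fun l => (∫ t in Set.Iio l, fM t * Real.exp (-(∫ r in t..l, aM r) - DaP l))
        + ∫ t in Set.Ioi l, fP t * Real.exp (-(DaP t)))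
    (hGM : GM = fun l => (∫ t in Set.Iio l, fP t * Real.exp (-(∫ r in t..l, aP r) - DaM l))
        + ∫ t in Set.Ioi l, fM t * Real.exp (-(DaM t)))
    (l : ℝ) :
    HasDerivAt GP
      (-(aM l - aP l) * (∫ t in Set.Iio l, fM t * Real.exp (-(∫ r in t..l, aM r) - DaP l))
        + (fM l - fP l) * Real.exp (-(DaP l))) l
    ∧ HasDerivAt GM
      ((aM l - aP l) * (∫ t in Set.Iio l, fP t * Real.exp (-(∫ r in t..l, aP r) - DaM l))
        - (fM l - fP l) * Real.exp (-(DaM l))) l :=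
  stmt_1_general fP fM aP aM hfPc hfMc hfPi hfMi haPc haMc haPs haMs DaP DaM hDaP hDaM GP GM hGP hGM
    l
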